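/- arXiv:2511.16503 — 9 statements merged into one kernel-verified Lean document; each statement's English description precedes it below -/
import Mathlib

section
/- Let (X,d) be a quasi-metric space, and let A ⊆ X be τ(d)-bounded. Then every forward continuous function f:(X,d)→(ℝ,|·|) is uniformly continuous when restricted to A. -/
open Filter Topology Set

structure IsQuasiMetric {X : Type*} (d : X → X → ℝ) : Prop where
  nonneg : ∀ x y, 0 ≤ d x y
  refl : ∀ x, d x x = 0
  eq_of_both_zero : ∀ x y, d x y = 0 → d y x = 0 → x = y
  triangle : ∀ x y z, d x y ≤ d x z + d z y

/-- The forward topology generated by forward balls `B⁺(x,ε) = {y | d x y < ε}`. -/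
def forwardTopology {X : Type*} (d : X → X → ℝ) : TopologicalSpace X :=
  TopologicalSpace.generateFrom {S | ∃ x : X, ∃ ε : ℝ, 0 < ε ∧ S = {y | d x y < ε}}

/-- `s` forward converges to `x`: `d x (s n) → 0`. -/
def ForwardConv {X : Type*} (d : X → X → ℝ) (s : ℕ → X) (x : X) : Prop :=
  ∀ ε > (0:ℝ), ∃ N : ℕ, ∀ n ≥ N, d x (s n) < ε

/-- `s` backward converges to `x`: `d (s n) x → 0`. -/
def BackwardConv {X : Type*} (d : X → X → ℝ) (s : ℕ → X) (x : X) : Prop :=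
  ∀ ε > (0:ℝ), ∃ N : ℕ, ∀ n ≥ N, d (s n) x < ε

/-- `x` is a cluster point of `s`: some subsequence forward converges to `x`. -/
def IsClusterPointOf {X : Type*} (d : X → X → ℝ) (s : ℕ → X) (x : X) : Prop :=
  ∃ φ : ℕ → ℕ, StrictMono φ ∧ ForwardConv d (s ∘ φ) x

def LeftKCauchy {X : Type*} (d : X → X → ℝ) (s : ℕ → X) : Prop :=
  ∀ ε > (0:ℝ), ∃ n₀ : ℕ, ∀ k n : ℕ, n₀ ≤ k → k ≤ n → d (s k) (s n) < ε

/-- `s` is forward parallel to `t`. -/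
def ForwardParallel {X : Type*} (d : X → X → ℝ) (s t : ℕ → X) : Prop :=
  ∀ ε > (0:ℝ), ∃ N : ℕ, ∀ n ≥ N, d (s n) (t n) < ε

/-- Forward continuity for real-valued functions (ε-δ form). -/
def ForwardContinuous {X : Type*} (d : X → X → ℝ) (f : X → ℝ) : Prop :=
  ∀ x₀ : X, ∀ ε > (0:ℝ), ∃ δ > (0:ℝ), ∀ y, d x₀ y < δ → |f x₀ - f y| < ε

/-- Uniform continuity for real-valued functions. -/
def UniformlyCont {X : Type*} (d : X → X → ℝ) (f : X → ℝ) : Prop :=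
  ∀ ε > (0:ℝ), ∃ δ > (0:ℝ), ∀ x y, d x y < δ → |f x - f y| < ε

/-- `(X,d)` is a UC quasi-metric space. -/
def IsUC {X : Type*} (d : X → X → ℝ) : Prop :=
  ∀ f : X → ℝ, ForwardContinuous d f → UniformlyCont d f

/-- Distance between two sets: `inf {d a b | a ∈ A, b ∈ B}`. -/
noncomputable def setDist {X : Type*} (d : X → X → ℝ) (A B : Set X) : ℝ :=
  sInf {r : ℝ | ∃ a ∈ A, ∃ b ∈ B, d a b = r}

/-- forward continuous real-valued functions are uniformly continuous on
τ(d)-bounded sets. -/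
theorem uniformlyCont_on_bounded {X : Type*} (d : X → X → ℝ) (hd : IsQuasiMetric d)
    (A : Set X)
    (hA : ∀ 𝒰 : Set (Set X), (∀ U ∈ 𝒰, (forwardTopology d).IsOpen U) →
      ⋃₀ 𝒰 = Set.univ → ∃ 𝒱 ⊆ 𝒰, 𝒱.Finite ∧ A ⊆ ⋃₀ 𝒱)
    (f : X → ℝ) (hf : ForwardContinuous d f) :
    ∀ ε > (0:ℝ), ∃ δ > (0:ℝ), ∀ x ∈ A, ∀ y ∈ A, d x y < δ → |f x - f y| < ε := by
  classical
  intro ε hε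
  choose δf hδpos hδ using fun x => hf x (ε/2) (half_pos hε)
  set B : X → Set X := fun x => {y | d x y < δf x / 2} with hB
  obtain ⟨𝒱, h𝒱sub, h𝒱fin, h𝒱cov⟩ := hA (Set.range B)
    (by
      rintro U ⟨x, rfl⟩
      exact TopologicalSpace.GenerateOpen.basic _ ⟨x, δf x / 2, half_pos (hδpos x), rfl⟩)
    (by
      ext z
      simp only [Set.mem_sUnion, Set.mem_univ, iff_true]
      refine ⟨B z, ⟨z, rfl⟩, ?_⟩
      simp only [hB, Set.mem_setOf_eq, hd.refl z]
      exact half_pos (hδpos z))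
  set F := h𝒱fin.toFinset with hF
  set g : Set X → ℝ := fun V => if h : ∃ x, V = B x then δf h.choose / 2 else 1 with hg
  by_cases hFne : F.Nonempty
  · set δ := F.inf' hFne g with hδdef
    have hgpos : ∀ V, 0 < g V := by
      intro V
      by_cases h : ∃ x, V = B x
      · simp only [hg, h, dif_pos]
        exact half_pos (hδpos _)
      · simp [hg, h]
    refine ⟨δ, ?_, ?_⟩
    · exact (Finset.lt_inf'_iff hFne).mpr fun V _ => hgpos V
    intro x hx y hy hxy
    obtain ⟨V, hV𝒱, hxV⟩ := h𝒱cov hx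
    have hex : ∃ x0, V = B x0 := by
      obtain ⟨x0, h⟩ := h𝒱sub hV𝒱
      exact ⟨x0, h.symm⟩
    set x0 := hex.choose with hx0
    have hVeq : V = B x0 := hex.choose_spec
    have hgV : g V = δf x0 / 2 := by simp only [hg, hex, dif_pos]; rfl
    have hVF : V ∈ F := by simp [hF, hV𝒱]
    have hδle : δ ≤ g V := Finset.inf'_le _ hVF
    have h1 : d x0 x < δf x0 / 2 := by
      rw [hVeq] at hxV; exact hxV
    have h2 : d x0 y < δf x0 := by
      calc d x0 y ≤ d x0 x + d x y := hd.triangle _ _ _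
        _ < δf x0 / 2 + δf x0 / 2 := add_lt_add h1 (lt_of_lt_of_le hxy (hδle.trans_eq hgV))
        _ = δf x0 := by ring
    have e1 := hδ x0 x (h1.trans_le (by linarith [hδpos x0]))
    have e2 := hδ x0 y h2
    have h3 : |f x - f y| ≤ |f x - f x0| + |f x0 - f y| := abs_sub_le _ _ _
    rw [abs_sub_comm (f x) (f x0)] at h3
    linarith
  · refine ⟨1, one_pos, fun x hx y hy hxy => ?_⟩
    exfalso
    obtain ⟨V, hV𝒱, -⟩ := h𝒱cov hx
    exact hFne ⟨V, by simp [hF, hV𝒱]⟩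
end

section
/- Every compact quasi-metric space (X,d) is a UC space: every forward continuous function f:(X,d)→(ℝ,|·|) is uniformly continuous. -/
open Filter Topology Set

/-!
Fix `ε > 0` and choose at every `x` a radius `δ x` such that `f` varies by less than `ε / 2` on the
forward ball `B⁺(x, δ x)`. The half-balls `B⁺(x, δ x / 2)` are open and cover `X`; the least radius
`η` of a finite subcover is a Lebesgue number: by the triangle inequality, every `x` lies, together
with `B⁺(x, η)`, in a single ball `B⁺(i, δ i)`, so `f` varies by less than `ε` on `B⁺(x, η)`.
-/

section ForwardTopology

variable {X : Type*} {d : X → X → ℝ}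

theorem isOpen_forwardBall (x : X) {ε : ℝ} (hε : 0 < ε) :
    IsOpen[forwardTopology d] {y | d x y < ε} :=
  TopologicalSpace.isOpen_generateFrom_of_mem ⟨x, ε, hε, rfl⟩

theorem exists_forwardBall_subset_of_isOpen (hd : IsQuasiMetric d) {U : Set X}
    (hU : IsOpen[forwardTopology d] U) : ∀ x ∈ U, ∃ δ > 0, {y | d x y < δ} ⊆ U := by
  induction hU with
  | basic S hS =>
    obtain ⟨a, ε, -, rfl⟩ := hS
    intro x (hx : d a x < ε)
    refine ⟨ε - d a x, sub_pos.2 hx, fun y (hy : d x y < ε - d a x) => ?_⟩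
    show d a y < ε
    linarith [hd.triangle a y x]
  | univ => exact fun _ _ => ⟨1, one_pos, subset_univ _⟩
  | inter U V _ _ ihU ihV =>
    intro x ⟨hxU, hxV⟩
    obtain ⟨δ₁, hδ₁, hU⟩ := ihU x hxU
    obtain ⟨δ₂, hδ₂, hV⟩ := ihV x hxV
    exact ⟨min δ₁ δ₂, lt_min hδ₁ hδ₂, fun y (hy : d x y < min δ₁ δ₂) =>
      ⟨hU (lt_min_iff.1 hy).1, hV (lt_min_iff.1 hy).2⟩⟩
  | sUnion S _ ih =>
    rintro x ⟨U, hUS, hxU⟩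
    obtain ⟨δ, hδ, hU⟩ := ih U hUS x hxU
    exact ⟨δ, hδ, hU.trans (subset_sUnion_of_mem hUS)⟩

theorem forwardContinuous_of_continuous (hd : IsQuasiMetric d) {f : X → ℝ}
    (hf : Continuous[forwardTopology d, _] f) : ForwardContinuous d f := by
  let _ := forwardTopology d
  intro x ε hε
  have hopen : IsOpen[forwardTopology d] (f ⁻¹' Metric.ball (f x) ε) :=
    hf.isOpen_preimage _ Metric.isOpen_ball
  obtain ⟨δ, hδ, hball⟩ :=
    exists_forwardBall_subset_of_isOpen hd hopen x (Metric.mem_ball_self hε)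
  refine ⟨δ, hδ, fun y hy => ?_⟩
  rw [abs_sub_comm, ← Real.dist_eq]
  exact hball hy

theorem exists_lebesgue_number_forwardBalls (hd : IsQuasiMetric d) (hcpt : @CompactSpace X (forwardTopology d))
    (δ : X → ℝ) (hδ : ∀ x, 0 < δ x) :
    ∃ η > 0, ∀ x, ∃ i, d i x < δ i ∧ ∀ y, d x y < η → d i y < δ i := by
  let _ := forwardTopology d
  obtain ⟨t, ht⟩ := hcpt.isCompact_univ.elim_finite_subcover (fun i => {y | d i y < δ i / 2})
    (fun i => isOpen_forwardBall i (half_pos (hδ i)))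
    (fun x _ => mem_iUnion.2 ⟨x, show d x x < δ x / 2 by simp [hd.refl, hδ x]⟩)
  -- a positive radius below the finitely many `δ i / 2`, found in the nontrivial filter `𝓝[>] 0`
  obtain ⟨η, hηt, hη : 0 < η⟩ := ((eventually_all_finset t).2 fun i _ =>
    (eventually_le_nhds (half_pos (hδ i))).filter_mono nhdsWithin_le_nhds).and
    (self_mem_nhdsWithin : ∀ᶠ η in 𝓝[>] (0 : ℝ), η ∈ Ioi 0) |>.exists
  refine ⟨η, hη, fun x => ?_⟩
  obtain ⟨i, hit, hix : d i x < δ i / 2⟩ := mem_iUnion₂.1 (ht (mem_univ x))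
  refine ⟨i, by linarith [hδ i], fun y hxy => ?_⟩
  linarith [hd.triangle i y x, hηt i hit]

end ForwardTopology

/-- every compact quasi-metric space is a UC space. -/
theorem compact_isUC {X : Type*} (d : X → X → ℝ) (hd : IsQuasiMetric d)
    (hcpt : @CompactSpace X (forwardTopology d))
    (f : X → ℝ) (hf : @Continuous X ℝ (forwardTopology d) _ f) :
    UniformlyCont d f := by
  intro ε hε
  choose δ hδ hfδ using fun x => forwardContinuous_of_continuous hd hf x (ε / 2) (half_pos hε)
  obtain ⟨η, hη, hleb⟩ := exists_lebesgue_number_forwardBalls hd hcpt δ hδ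
  refine ⟨η, hη, fun x y hxy => ?_⟩
  obtain ⟨i, hix, hiy⟩ := hleb x
  calc |f x - f y| ≤ |f i - f x| + |f i - f y| := by
        rw [abs_sub_comm (f i)]; exact abs_sub_le _ _ _
    _ < ε / 2 + ε / 2 := add_lt_add (hfδ i x hix) (hfδ i y (hiy y hxy))
    _ = ε := add_halves ε
end

section
/- Every forward continuous function f from (ℝ, d_l), where d_l is the lower quasi-metric on ℝ, to (ℝ,|·|) is constant. Consequently (ℝ, d_l) is a UC quasi-metric space. -/
open Filter Topology Set

/-- The lower quasi-metric on ℝ. -/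
noncomputable def lowerQuasiMetric : ℝ → ℝ → ℝ :=
  fun x y => if y ≤ x then x - y else 0

/-!
A point at forward distance zero from `x` lies in every forward ball around `x`, so a forward
continuous function takes the same value there as at `x`. For `d_l` both `a` and `b` are at
forward distance zero from `max a b`, hence every forward continuous function is constant.
-/

theorem ForwardContinuous.apply_eq_of_eq_zero {X : Type*} {d : X → X → ℝ} {f : X → ℝ}
    (hf : ForwardContinuous d f) {x y : X} (hxy : d x y = 0) : f x = f y :=
  eq_of_forall_dist_le fun ε hε => by
    obtain ⟨δ, hδ, hball⟩ := hf x ε hε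
    exact (Real.dist_eq _ _ ▸ hball y (hxy ▸ hδ)).le

theorem uniformlyCont_of_forall_eq {X : Type*} (d : X → X → ℝ) {f : X → ℝ}
    (hf : ∀ a b, f a = f b) : UniformlyCont d f :=
  fun ε hε => ⟨1, one_pos, fun x y _ => by rwa [hf x y, sub_self, abs_zero]⟩

theorem lowerQuasiMetric_eq_zero {x y : ℝ} (h : x ≤ y) : lowerQuasiMetric x y = 0 := by
  unfold lowerQuasiMetric
  split_ifs <;> linarith

/-- every forward continuous function on `(ℝ, d_l)` is constant; consequently
`(ℝ, d_l)` is a UC quasi-metric space. -/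
theorem lowerQuasiMetric_isUC :
    (∀ f : ℝ → ℝ, ForwardContinuous lowerQuasiMetric f → ∀ a b : ℝ, f a = f b) ∧
      IsUC lowerQuasiMetric := by
  have hconst : ∀ f : ℝ → ℝ, ForwardContinuous lowerQuasiMetric f → ∀ a b : ℝ, f a = f b :=
    fun f hf a b =>
      (hf.apply_eq_of_eq_zero (lowerQuasiMetric_eq_zero (le_max_left a b))).trans
        (hf.apply_eq_of_eq_zero (lowerQuasiMetric_eq_zero (le_max_right a b))).symm
  exact ⟨hconst, fun f hf => uniformlyCont_of_forall_eq _ (hconst f hf)⟩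
end

section
/- Let (X,d) be a T₁ quasi-metric space in which forward convergence implies backward convergence. If (X,d) is a UC space, then the associated metric space (X,d^s), where d^s(x,y)=max{d(x,y),d(y,x)}, is a UC metric space. -/
/-!
Since forward convergence implies backward convergence, a sequence forward converging for `d`
converges for `dˢ`; so a `dˢ`-continuous function is forward continuous for `d`, hence
`d`-uniformly continuous, hence `dˢ`-uniformly continuous because `d ≤ dˢ`.
-/

open Filter Topology Set

section

variable {X : Type*}

lemma forwardConv_of_lt_one_div_succ {d : X → X → ℝ} {s : ℕ → X} {x : X}
    (hs : ∀ n : ℕ, d x (s n) < 1 / (n + 1)) : ForwardConv d s x := by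
  intro ε hε
  obtain ⟨N, hN⟩ := exists_nat_one_div_lt hε
  refine ⟨N, fun n hn => (hs n).trans_le ?_⟩
  calc (1 : ℝ) / (n + 1) ≤ 1 / (N + 1) := by gcongr
    _ ≤ ε := hN.le

lemma UniformlyCont.mono_dist {d d' : X → X → ℝ} {f : X → ℝ}
    (hle : ∀ x y, d x y ≤ d' x y) (hf : UniformlyCont d f) : UniformlyCont d' f := by
  intro ε hε
  obtain ⟨δ, hδ, hfδ⟩ := hf ε hε
  exact ⟨δ, hδ, fun x y hxy => hfδ x y ((hle x y).trans_lt hxy)⟩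

lemma forwardContinuous_of_forwardContinuous_max {d : X → X → ℝ} {f : X → ℝ}
    (hfb : ∀ (s : ℕ → X) (x : X), ForwardConv d s x → BackwardConv d s x)
    (hf : ForwardContinuous (fun x y => max (d x y) (d y x)) f) : ForwardContinuous d f := by
  intro x₀ ε hε
  by_contra! hbad
  choose y hy_near hy_far using fun n : ℕ => hbad (1 / (n + 1)) (by positivity)
  have hfwd : ForwardConv d y x₀ := forwardConv_of_lt_one_div_succ hy_near
  have hbwd : BackwardConv d y x₀ := hfb y x₀ hfwd
  obtain ⟨δ, hδ, hfδ⟩ := hf x₀ ε hε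
  obtain ⟨Nf, hNf⟩ := hfwd δ hδ
  obtain ⟨Nb, hNb⟩ := hbwd δ hδ
  set n := max Nf Nb
  exact (hy_far n).not_gt
    (hfδ (y n) (max_lt (hNf n (le_max_left _ _)) (hNb n (le_max_right _ _))))

end

theorem assoc_metric_isUC_general {X : Type*} (d : X → X → ℝ)
    (hfb : ∀ (s : ℕ → X) (x : X), ForwardConv d s x → BackwardConv d s x)
    (hUC : IsUC d) :
    IsUC (fun x y => max (d x y) (d y x)) := fun f hf =>
  (hUC f (forwardContinuous_of_forwardContinuous_max hfb hf)).mono_dist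
    fun _ _ => le_max_left _ _

/-- if a T₁ quasi-metric space with forward ⟹ backward convergence is UC,
then its associated metric space `(X, dˢ)` is UC. -/
theorem assoc_metric_isUC {X : Type*} (d : X → X → ℝ) (hd : IsQuasiMetric d)
    (hT1 : ∀ x y : X, x ≠ y → 0 < d x y)
    (hfb : ∀ (s : ℕ → X) (x : X), ForwardConv d s x → BackwardConv d s x)
    (hUC : IsUC d) :
    IsUC (fun x y => max (d x y) (d y x)) :=
  assoc_metric_isUC_general d hfb hUC
end

section
/- Let (X,d) be a quasi-metric space whose forward topology is normal (and T₁). If (X,d) is a UC space, then (X,d) is left K-complete, i.e., every left K-Cauchy sequence is forward convergent. -/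
open Filter Topology Set

/-! If a left K-Cauchy sequence `s` had no forward limit, every point would have a forward ball
containing only finitely many of its terms, since a point with infinitely many terms in each of
its balls is a forward limit of a left K-Cauchy sequence. So the singletons `{s n}` form a locally
finite family and, the space being T₁, every set of terms of `s` is closed. The even and odd terms
of an injective subsequence are then disjoint closed sets, and Urysohn's lemma gives a continuous
`f` equal to `0` on the first and `1` on the second. As `f` is uniformly continuous, `f ∘ s` is
Cauchy, which is impossible since it takes both values arbitrarily late. -/

open TopologicalSpace Function

section QuasiMetric

variable {X : Type*} {d : X → X → ℝ}

def forwardBall (d : X → X → ℝ) (x : X) (ε : ℝ) : Set X := {y | d x y < ε}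

@[simp]
lemma mem_forwardBall {x y : X} {ε : ℝ} : y ∈ forwardBall d x ε ↔ d x y < ε := Iff.rfl

namespace IsQuasiMetric

variable (hd : IsQuasiMetric d)
include hd

lemma mem_forwardBall_self {x : X} {ε : ℝ} (hε : 0 < ε) : x ∈ forwardBall d x ε := by
  simpa [hd.refl] using hε

lemma forwardBall_sub_subset (x z : X) (ε : ℝ) :
    forwardBall d z (ε - d x z) ⊆ forwardBall d x ε := fun y hy => by
  have := hd.triangle x y z
  simp only [mem_forwardBall] at *
  linarith

lemma isTopologicalBasis_forwardBall :
    @IsTopologicalBasis X (forwardTopology d)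
      {B | ∃ x : X, ∃ ε : ℝ, 0 < ε ∧ B = forwardBall d x ε} := by
  let := forwardTopology d
  refine ⟨?_, ?_, rfl⟩
  · rintro _ ⟨x₁, ε₁, -, rfl⟩ _ ⟨x₂, ε₂, -, rfl⟩ z ⟨h₁, h₂⟩
    have hr : 0 < min (ε₁ - d x₁ z) (ε₂ - d x₂ z) :=
      lt_min (sub_pos.2 h₁) (sub_pos.2 h₂)
    refine ⟨_, ⟨z, _, hr, rfl⟩, hd.mem_forwardBall_self hr, fun y hy => ⟨?_, ?_⟩⟩
    · exact hd.forwardBall_sub_subset x₁ z ε₁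
        ((mem_forwardBall.1 hy).trans_le (min_le_left _ _))
    · exact hd.forwardBall_sub_subset x₂ z ε₂
        ((mem_forwardBall.1 hy).trans_le (min_le_right _ _))
  · exact eq_univ_of_forall fun x =>
      ⟨forwardBall d x 1, ⟨x, 1, one_pos, rfl⟩, hd.mem_forwardBall_self one_pos⟩

lemma hasBasis_nhds_forwardBall (x : X) :
    (@nhds X (forwardTopology d) x).HasBasis (fun ε => 0 < ε) (forwardBall d x) := by
  let := forwardTopology d
  refine ⟨fun t => ⟨fun ht => ?_, fun ⟨ε, hε, hsub⟩ => ?_⟩⟩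
  · obtain ⟨_, ⟨y, r, -, rfl⟩, hx, hsub⟩ :=
      hd.isTopologicalBasis_forwardBall.mem_nhds_iff.1 ht
    exact ⟨r - d y x, sub_pos.2 hx, (hd.forwardBall_sub_subset y x r).trans hsub⟩
  · exact hd.isTopologicalBasis_forwardBall.mem_nhds_iff.2
      ⟨_, ⟨x, ε, hε, rfl⟩, hd.mem_forwardBall_self hε, hsub⟩

lemma forwardContinuous_of_continuous {f : X → ℝ}
    (hf : @Continuous X ℝ (forwardTopology d) _ f) :
    ForwardContinuous d f := fun x ε hε => by
  let := forwardTopology d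
  obtain ⟨δ, hδ, hball⟩ :=
    ((hd.hasBasis_nhds_forwardBall x).tendsto_iff Metric.nhds_basis_ball).1 (hf.tendsto x) ε hε
  exact ⟨δ, hδ, fun y hy => by simpa [abs_sub_comm, Real.dist_eq] using hball y hy⟩

lemma forwardConv_of_infinite {s : ℕ → X} (hs : LeftKCauchy d s) {x : X}
    (hx : ∀ ε > 0, {n | d x (s n) < ε}.Infinite) : ForwardConv d s x := by
  intro ε hε
  obtain ⟨n₀, hn₀⟩ := hs (ε / 2) (half_pos hε)
  obtain ⟨k, hk, hn₀k⟩ := (hx (ε / 2) (half_pos hε)).exists_gt n₀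
  refine ⟨k, fun n hn => ?_⟩
  have h₁ : d x (s k) < ε / 2 := hk
  have h₂ := hn₀ k n hn₀k.le hn
  have := hd.triangle x (s n) (s k)
  linarith

lemma locallyFinite_singleton_of_not_forwardConv {s : ℕ → X} (hs : LeftKCauchy d s)
    (hconv : ∀ x, ¬ ForwardConv d s x) :
    @LocallyFinite ℕ X (forwardTopology d) fun n => {s n} := by
  intro x
  obtain ⟨ε, hε, hfin⟩ : ∃ ε > 0, {n | d x (s n) < ε}.Finite := by
    by_contra! h
    exact hconv x (hd.forwardConv_of_infinite hs h)
  exact ⟨forwardBall d x ε, (hd.hasBasis_nhds_forwardBall x).mem_of_mem hε,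
    by simpa only [singleton_inter_nonempty, mem_forwardBall] using hfin⟩

end IsQuasiMetric

end QuasiMetric

lemma LocallyFinite.isClosed_range {ι X : Type*} [TopologicalSpace X] [T1Space X] {s : ι → X}
    (hs : LocallyFinite fun i => ({s i} : Set X)) : IsClosed (range s) := by
  simpa only [iUnion_singleton_eq_range] using hs.isClosed_iUnion fun _ => isClosed_singleton

lemma exists_strictMono_injective_comp {α : Type*} {s : ℕ → α}
    (hs : ∀ a, (s ⁻¹' {a}).Finite) :
    ∃ φ : ℕ → ℕ, StrictMono φ ∧ Injective (s ∘ φ) := by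
  classical
  let IsFirst : ℕ → Prop := fun n => ∀ m < n, s m ≠ s n
  have hrange : (range s).Infinite := fun hfin => infinite_univ (by
    simpa using hfin.preimage' fun a _ => hs a)
  have hfirst : (Set.ofPred IsFirst).Infinite := by
    refine Infinite.of_image s (hrange.mono ?_)
    rintro _ ⟨k, rfl⟩
    have hex : ∃ n, s n = s k := ⟨k, rfl⟩
    exact ⟨Nat.find hex, fun m hm h => Nat.find_min hex hm (h.trans (Nat.find_spec hex)),
      Nat.find_spec hex⟩
  refine ⟨Nat.nth IsFirst, Nat.nth_strictMono hfirst, Injective.of_lt_imp_ne fun i j hij => ?_⟩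
  exact Nat.nth_mem_of_infinite hfirst j _ (Nat.nth_strictMono hfirst hij)

lemma IsUC.cauchySeq_comp {X : Type*} {d : X → X → ℝ} (hUC : IsUC d) {s : ℕ → X}
    (hs : LeftKCauchy d s) {f : X → ℝ} (hf : ForwardContinuous d f) : CauchySeq (f ∘ s) := by
  refine Metric.cauchySeq_iff.2 fun ε hε => ?_
  obtain ⟨δ, hδ, hfδ⟩ := hUC f hf ε hε
  obtain ⟨n₀, hn₀⟩ := hs δ hδ
  refine ⟨n₀, fun m hm n hn => ?_⟩
  rcases le_total m n with hmn | hnm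
  · exact hfδ _ _ (hn₀ m n hm hmn)
  · rw [dist_comm]
    exact hfδ _ _ (hn₀ n m hn hnm)

/-- a UC quasi-metric space whose forward topology is normal (and T₁)
is left K-complete. -/
theorem isUC_leftKComplete {X : Type*} (d : X → X → ℝ) (hd : IsQuasiMetric d)
    (hT1 : @T1Space X (forwardTopology d))
    (hN : @NormalSpace X (forwardTopology d))
    (hUC : IsUC d) :
    ∀ s : ℕ → X, LeftKCauchy d s → ∃ x : X, ForwardConv d s x := by
  intro s hs
  by_contra! hconv
  let := forwardTopology d
  have hlf := hd.locallyFinite_singleton_of_not_forwardConv hs hconv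
  obtain ⟨φ, hφ, hinj⟩ := exists_strictMono_injective_comp fun x =>
    (hlf.point_finite x).subset fun n (hn : s n = x) => hn.symm
  have hclosed (g : ℕ → ℕ) (hg : Injective g) : IsClosed (range fun n => s (φ (g n))) :=
    (hlf.comp_injective (hφ.injective.comp hg)).isClosed_range
  have hdisj : Disjoint (range fun n => s (φ (2 * n))) (range fun n => s (φ (2 * n + 1))) := by
    refine disjoint_left.2 ?_
    rintro _ ⟨i, rfl⟩ ⟨j, hj⟩
    have := hinj hj
    omega
  obtain ⟨f, hf₀, hf₁, -⟩ := exists_continuous_zero_one_of_isClosed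
    (hclosed (2 * ·) (mul_right_injective₀ two_ne_zero))
    (hclosed (2 * · + 1) fun i j h => by dsimp only at h; omega) hdisj
  have hcauchy : CauchySeq (f ∘ s ∘ φ) :=
    (hUC.cauchySeq_comp hs (hd.forwardContinuous_of_continuous f.continuous)).comp_tendsto
      hφ.tendsto_atTop
  obtain ⟨N, hNdist⟩ := Metric.cauchySeq_iff.1 hcauchy 1 one_pos
  have hdist := hNdist (2 * N) (by omega) (2 * N + 1) (by omega)
  have h₀ : f (s (φ (2 * N))) = 0 := hf₀ ⟨N, rfl⟩
  have h₁ : f (s (φ (2 * N + 1))) = 1 := hf₁ ⟨N, rfl⟩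
  simp [h₀, h₁] at hdist
end

section
/- Let (X,d) be a T₂ (Hausdorff) quasi-metric space. If (x_n) and (y_n) are sequences in X such that (x_n) has no cluster point in (X,d) and 0 < d(x_n,y_n) < 1/n for all n, then there exist two disjoint closed subsets C and D of (X,d), each containing infinitely many terms of (x_n) and (y_n) respectively, with d(C,D)=0. -/
/-!
Since `x` has no cluster point, the singletons `{x n}` form a locally finite family: every set of
terms of `x` is closed, and `x` visits each compact set only finitely often. So it suffices to find
a closed `D` with `y n ∈ D` and `x n ∉ D` for infinitely many `n`; then `C` is the set of those
`x n`, and `d (x n) (y n) → 0` gives `d(C, D) = 0`. If some subsequence `y ∘ φ` converges to `p`,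
take `D = {p} ∪ range (y ∘ φ)`, which is compact. Otherwise `y` is locally finite as well, and a
greedy subsequence `g` with `x (g i) ≠ y (g j)` for all `i, j` gives the closed set
`D = y '' range g`.
-/

open Filter Topology Set

section SequenceWithoutClusterPoints

variable {X : Type*} [TopologicalSpace X] {u : ℕ → X}

theorem locallyFinite_singleton_iff :
    LocallyFinite (fun n => ({u n} : Set X)) ↔ ∀ p, ¬MapClusterPt p atTop u := by
  simp [LocallyFinite, mapClusterPt_iff_frequently, Nat.frequently_atTop_iff_infinite]

theorem LocallyFinite.isClosed_image [T1Space X] (hu : LocallyFinite fun n => ({u n} : Set X))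
    (S : Set ℕ) : IsClosed (u '' S) := by
  convert (hu.comp_injective (Subtype.val_injective (p := (· ∈ S)))).isClosed_iUnion
    fun _ => isClosed_singleton using 1
  ext; simp

theorem LocallyFinite.finite_setOf_mem (hu : LocallyFinite fun n => ({u n} : Set X))
    {K : Set X} (hK : IsCompact K) : {n | u n ∈ K}.Finite := by
  simpa using hu.finite_nonempty_inter_compact hK

end SequenceWithoutClusterPoints

theorem exists_strictMono_forall_ne {α : Type*} {x y : ℕ → α}
    (hx : ∀ a, {n | x n = a}.Finite) (hy : ∀ a, {n | y n = a}.Finite) (hxy : ∀ n, x n ≠ y n) :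
    ∃ g : ℕ → ℕ, StrictMono g ∧ ∀ i j, x (g i) ≠ y (g j) := by
  -- Avoiding the constraints from all indices `≤ N`, not just from the chosen ones, makes the
  -- greedy choice a plain iteration of `F`.
  have step : ∀ N, ∃ n, N < n ∧ ∀ m ≤ N, x m ≠ y n ∧ y m ≠ x n := by
    intro N
    have hfin : (Iic N ∪ ⋃ m ∈ Iic N, ({n | y n = x m} ∪ {n | x n = y m})).Finite :=
      (finite_Iic N).union <| (finite_Iic N).biUnion fun m _ => (hy _).union (hx _)
    obtain ⟨n, hn⟩ := hfin.infinite_compl.nonempty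
    simp only [mem_compl_iff, mem_union, mem_Iic, mem_iUnion, mem_ofPred_eq, not_or, not_exists,
      not_le] at hn
    exact ⟨n, hn.1, fun m hm => ⟨fun h => (hn.2 m hm).1 h.symm, fun h => (hn.2 m hm).2 h.symm⟩⟩
  choose F hF using step
  set g : ℕ → ℕ := fun k => F^[k] 0
  have hg_succ : ∀ k, g (k + 1) = F (g k) := fun k => Function.iterate_succ_apply' F k 0
  have hg : StrictMono g := strictMono_nat_of_lt_succ fun k => hg_succ k ▸ (hF (g k)).1
  refine ⟨g, hg, fun i j => ?_⟩
  rcases lt_trichotomy i j with hij | rfl | hji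
  · obtain ⟨k, rfl⟩ : ∃ k, j = k + 1 := ⟨j - 1, by omega⟩
    rw [hg_succ]
    exact ((hF (g k)).2 (g i) (hg.monotone (Nat.le_of_lt_succ hij))).1
  · exact hxy (g i)
  · obtain ⟨k, rfl⟩ : ∃ k, i = k + 1 := ⟨i - 1, by omega⟩
    rw [hg_succ]
    exact ((hF (g k)).2 (g j) (hg.monotone (Nat.le_of_lt_succ hji))).2.symm

section InfinitelySeparatingClosedSet

variable {X : Type*} [TopologicalSpace X] {x y : ℕ → X}

theorem exists_isClosed_infinite_mem_not_mem_of_locallyFinite [T1Space X]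
    (hx : LocallyFinite fun n => ({x n} : Set X)) (hy : LocallyFinite fun n => ({y n} : Set X))
    (hxy : ∀ n, x n ≠ y n) : ∃ D : Set X, IsClosed D ∧ {n | y n ∈ D ∧ x n ∉ D}.Infinite := by
  obtain ⟨g, hg, hne⟩ := exists_strictMono_forall_ne
    (fun a => hx.finite_setOf_mem isCompact_singleton)
    (fun a => hy.finite_setOf_mem isCompact_singleton) hxy
  refine ⟨y '' range g, hy.isClosed_image _, (infinite_range_of_injective hg.injective).mono ?_⟩
  rintro _ ⟨k, rfl⟩
  exact ⟨mem_image_of_mem y (mem_range_self k), fun ⟨_, ⟨j, rfl⟩, h⟩ => hne k j h.symm⟩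

theorem exists_isClosed_infinite_mem_not_mem_of_tendsto [T2Space X]
    (hx : LocallyFinite fun n => ({x n} : Set X)) {φ : ℕ → ℕ} (hφ : StrictMono φ) {p : X}
    (hy : Tendsto (y ∘ φ) atTop (𝓝 p)) :
    ∃ D : Set X, IsClosed D ∧ {n | y n ∈ D ∧ x n ∉ D}.Infinite := by
  have hK := hy.isCompact_insert_range
  refine ⟨_, hK.isClosed, ((infinite_range_of_injective hφ.injective).sdiff
    (hx.finite_setOf_mem hK)).mono ?_⟩
  rintro _ ⟨⟨k, rfl⟩, hk⟩
  exact ⟨mem_insert_of_mem _ ⟨k, rfl⟩, hk⟩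

theorem exists_isClosed_infinite_mem_not_mem [T2Space X] [FirstCountableTopology X]
    (hx : LocallyFinite fun n => ({x n} : Set X)) (hxy : ∀ n, x n ≠ y n) :
    ∃ D : Set X, IsClosed D ∧ {n | y n ∈ D ∧ x n ∉ D}.Infinite := by
  by_cases hy : LocallyFinite fun n => ({y n} : Set X)
  · exact exists_isClosed_infinite_mem_not_mem_of_locallyFinite hx hy hxy
  · obtain ⟨p, hp⟩ : ∃ p, MapClusterPt p atTop y := by
      simpa [locallyFinite_singleton_iff] using hy
    obtain ⟨φ, hφ, hyφ⟩ := hp.tendsto_subseq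
    exact exists_isClosed_infinite_mem_not_mem_of_tendsto hx hφ hyφ

end InfinitelySeparatingClosedSet

section QuasiMetric

variable {X : Type*} {d : X → X → ℝ}

theorem exists_forwardBall_subset (hd : IsQuasiMetric d) {c z : X} {δ : ℝ} (hz : d c z < δ) :
    ∃ ε > 0, {y | d z y < ε} ⊆ {y | d c y < δ} :=
  ⟨δ - d c z, sub_pos.2 hz, fun y (hy : d z y < δ - d c z) =>
    show d c y < δ by linarith [hd.triangle c y z]⟩

theorem isTopologicalBasis_forwardBalls (hd : IsQuasiMetric d) :
    @TopologicalSpace.IsTopologicalBasis X (forwardTopology d)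
      {S | ∃ x : X, ∃ ε : ℝ, 0 < ε ∧ S = {y | d x y < ε}} := by
  let := forwardTopology d
  refine ⟨?_, sUnion_eq_univ_iff.2 fun z => ⟨_, ⟨z, 1, one_pos, rfl⟩, by simp [hd.refl]⟩, rfl⟩
  rintro _ ⟨c₁, δ₁, -, rfl⟩ _ ⟨c₂, δ₂, -, rfl⟩ z ⟨hz₁, hz₂⟩
  obtain ⟨ε₁, hε₁, h₁⟩ := exists_forwardBall_subset hd hz₁
  obtain ⟨ε₂, hε₂, h₂⟩ := exists_forwardBall_subset hd hz₂
  refine ⟨_, ⟨z, min ε₁ ε₂, lt_min hε₁ hε₂, rfl⟩, by simp [hd.refl, hε₁, hε₂], ?_⟩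
  exact fun y (hy : d z y < min ε₁ ε₂) =>
    ⟨h₁ (hy.trans_le (min_le_left _ _)), h₂ (hy.trans_le (min_le_right _ _))⟩

theorem nhds_basis_forwardBall (hd : IsQuasiMetric d) (x : X) :
    (@nhds X (forwardTopology d) x).HasBasis (fun ε : ℝ => 0 < ε) fun ε => {y | d x y < ε} := by
  let := forwardTopology d
  exact (isTopologicalBasis_forwardBalls hd).nhds_hasBasis.to_hasBasis
    (fun _ ⟨⟨_, _, _, hS⟩, hx⟩ => by subst hS; exact exists_forwardBall_subset hd hx)
    fun ε hε => ⟨_, ⟨⟨x, ε, hε, rfl⟩, by simp [hd.refl, hε]⟩, subset_rfl⟩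

theorem firstCountableTopology_forwardTopology (hd : IsQuasiMetric d) :
    @FirstCountableTopology X (forwardTopology d) := by
  let := forwardTopology d
  refine ⟨fun x => HasBasis.isCountablyGenerated (p := fun _ : ℕ => True)
    (s := fun n => {y | d x y < 1 / (n + 1)}) ?_⟩
  refine (nhds_basis_forwardBall hd x).to_hasBasis
    (fun ε hε => (exists_nat_one_div_lt hε).imp fun n hn => ⟨trivial, ?_⟩)
    fun n _ => ⟨1 / (n + 1), Nat.one_div_pos_of_nat, subset_rfl⟩
  exact fun y (hy : d x y < 1 / (n + 1)) => show d x y < ε from hy.trans hn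

theorem forwardConv_iff_tendsto (hd : IsQuasiMetric d) {s : ℕ → X} {x : X} :
    ForwardConv d s x ↔ @Tendsto ℕ X s atTop (@nhds X (forwardTopology d) x) := by
  simp [ForwardConv, (nhds_basis_forwardBall hd x).tendsto_right_iff]

theorem locallyFinite_singleton_of_not_exists_isClusterPointOf
    (hd : IsQuasiMetric d) {s : ℕ → X} (h : ¬∃ p, IsClusterPointOf d s p) :
    @LocallyFinite ℕ X (forwardTopology d) fun n => {s n} := by
  let := forwardTopology d
  have := firstCountableTopology_forwardTopology hd
  refine locallyFinite_singleton_iff.2 fun p hp => h ?_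
  obtain ⟨φ, hφ, hsφ⟩ := hp.tendsto_subseq
  exact ⟨p, φ, hφ, (forwardConv_iff_tendsto hd).2 hsφ⟩

theorem setDist_eq_zero_of_frequently (hnonneg : ∀ a b, 0 ≤ d a b)
    {C D : Set X} {x y : ℕ → X} (hxy : Tendsto (fun n => d (x n) (y n)) atTop (𝓝 0))
    (h : ∃ᶠ n in atTop, x n ∈ C ∧ y n ∈ D) : setDist d C D = 0 := by
  have hbdd : BddBelow {r | ∃ a ∈ C, ∃ b ∈ D, d a b = r} :=
    ⟨0, by rintro _ ⟨a, -, b, -, rfl⟩; exact hnonneg a b⟩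
  obtain ⟨n, hxn, hyn⟩ := h.exists
  refine le_antisymm ((Real.sInf_le_iff hbdd ⟨_, x n, hxn, y n, hyn, rfl⟩).2 fun ε hε => ?_)
    (Real.sInf_nonneg fun _ ⟨a, _, b, _, hab⟩ => hab ▸ hnonneg a b)
  obtain ⟨m, ⟨hxm, hym⟩, hm⟩ := (h.and_eventually (hxy (Iio_mem_nhds hε))).exists
  exact ⟨_, ⟨x m, hxm, y m, hym, rfl⟩, by simpa using hm⟩

end QuasiMetric

/-- existence of disjoint closed sets at distance zero. -/
theorem exists_disjoint_closed_sets_near {X : Type*} (d : X → X → ℝ)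
    (hd : IsQuasiMetric d)
    (hT2 : @T2Space X (forwardTopology d))
    (x y : ℕ → X)
    (hnc : ¬ ∃ p : X, IsClusterPointOf d x p)
    (hxy : ∀ n : ℕ, 0 < d (x n) (y n) ∧ d (x n) (y n) < 1 / (n + 1)) :
    ∃ C D : Set X, @IsClosed X (forwardTopology d) C ∧ @IsClosed X (forwardTopology d) D ∧
      Disjoint C D ∧ {n : ℕ | x n ∈ C}.Infinite ∧ {n : ℕ | y n ∈ D}.Infinite ∧
      setDist d C D = 0 := by
  let := forwardTopology d
  have := firstCountableTopology_forwardTopology hd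
  have hx := locallyFinite_singleton_of_not_exists_isClusterPointOf hd hnc
  have hne : ∀ n, x n ≠ y n := fun n h => by simpa [h, hd.refl] using (hxy n).1
  obtain ⟨D, hD, hT⟩ := exists_isClosed_infinite_mem_not_mem hx hne
  refine ⟨x '' {n | y n ∈ D ∧ x n ∉ D}, D, hx.isClosed_image _, hD, ?_,
    hT.mono fun n hn => mem_image_of_mem x hn, hT.mono fun n hn => hn.1, ?_⟩
  · exact disjoint_left.2 fun _ ⟨_, hn, hxn⟩ => hxn ▸ hn.2
  · have hdist : Tendsto (fun n => d (x n) (y n)) atTop (𝓝 0) :=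
      squeeze_zero (fun n => (hxy n).1.le) (fun n => (hxy n).2.le)
        tendsto_one_div_add_atTop_nhds_zero_nat
    exact setDist_eq_zero_of_frequently hd.nonneg hdist <| Nat.frequently_atTop_iff_infinite.2 <|
      hT.mono fun n hn => ⟨mem_image_of_mem x hn, hn.1⟩
end

section
/- Let (X,d) be a quasi-metric space (T₁, forward topology normal). If whenever sequences (x_n),(y_n) satisfy x_n≠y_n for all n and (x_n) is forward parallel to (y_n), the sequence (x_n) has a cluster point, then (X,d) is a UC space. -/
open Filter Topology Set

/-!
If a forward continuous `f` is not uniformly continuous, there are points `x_n ≠ y_n` with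
`d x_n y_n → 0` but `|f x_n - f y_n| ≥ ε`. By hypothesis a subsequence of `x_n` forward converges
to some `x`; by the triangle inequality so does the corresponding subsequence of `y_n`, and forward
continuity at `x` then forces `|f x_n - f y_n| → 0` along it.
-/

theorem ForwardParallel.comp_strictMono {X : Type*} {d : X → X → ℝ} {s t : ℕ → X}
    (hst : ForwardParallel d s t) {φ : ℕ → ℕ} (hφ : StrictMono φ) :
    ForwardParallel d (s ∘ φ) (t ∘ φ) := by
  intro ε hε
  obtain ⟨N, hN⟩ := hst ε hε
  exact ⟨N, fun n hn => hN (φ n) (hn.trans (hφ.id_le n))⟩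

theorem ForwardConv.of_forwardParallel {X : Type*} {d : X → X → ℝ} (hd : IsQuasiMetric d)
    {s t : ℕ → X} {x : X} (hs : ForwardConv d s x) (hst : ForwardParallel d s t) :
    ForwardConv d t x := by
  intro ε hε
  obtain ⟨N₁, hN₁⟩ := hs (ε / 2) (half_pos hε)
  obtain ⟨N₂, hN₂⟩ := hst (ε / 2) (half_pos hε)
  refine ⟨max N₁ N₂, fun n hn => ?_⟩
  calc d x (t n) ≤ d x (s n) + d (s n) (t n) := hd.triangle _ _ _
    _ < ε / 2 + ε / 2 :=
      add_lt_add (hN₁ n (le_of_max_le_left hn)) (hN₂ n (le_of_max_le_right hn))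
    _ = ε := add_halves ε

theorem ForwardContinuous.tendsto_comp {X : Type*} {d : X → X → ℝ} {f : X → ℝ}
    (hf : ForwardContinuous d f) {s : ℕ → X} {x : X} (hs : ForwardConv d s x) :
    Tendsto (f ∘ s) atTop (𝓝 (f x)) := by
  refine Metric.tendsto_atTop.2 fun ε hε => ?_
  obtain ⟨δ, hδ, hδf⟩ := hf x ε hε
  obtain ⟨N, hN⟩ := hs δ hδ
  refine ⟨N, fun n hn => ?_⟩
  rw [Real.dist_eq, abs_sub_comm]
  exact hδf (s n) (hN n hn)

theorem exists_forwardParallel_of_not_uniformlyCont {X : Type*} {d : X → X → ℝ} {f : X → ℝ}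
    (hf : ¬ UniformlyCont d f) :
    ∃ ε > 0, ∃ s t : ℕ → X, ForwardParallel d s t ∧ ∀ n, ε ≤ |f (s n) - f (t n)| := by
  unfold UniformlyCont at hf
  push Not at hf
  obtain ⟨ε, hε, hbad⟩ := hf
  have hpair : ∀ n : ℕ, ∃ x y, d x y < 1 / ((n : ℝ) + 1) ∧ ε ≤ |f x - f y| := fun n =>
    hbad _ Nat.one_div_pos_of_nat
  choose s t hst hgap using hpair
  refine ⟨ε, hε, s, t, fun δ hδ => ?_, hgap⟩
  obtain ⟨N, hN⟩ := (tendsto_one_div_add_atTop_nhds_zero_nat.eventually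
    (gt_mem_nhds hδ)).exists_forall_of_atTop
  exact ⟨N, fun n hn => (hst n).trans (hN n hn)⟩

theorem isUC_of_parallel_cluster_general {X : Type*} (d : X → X → ℝ) (hd : IsQuasiMetric d)
    (h : ∀ s t : ℕ → X, (∀ n, s n ≠ t n) → ForwardParallel d s t →
      ∃ x : X, IsClusterPointOf d s x) :
    IsUC d := by
  intro f hf
  by_contra hnot
  obtain ⟨ε, hε, s, t, hst, hgap⟩ := exists_forwardParallel_of_not_uniformlyCont hnot
  have hne : ∀ n, s n ≠ t n := fun n heq => by
    have := hgap n
    rw [heq, sub_self, abs_zero] at this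
    exact this.not_gt hε
  obtain ⟨x, φ, hφ, hsx⟩ := h s t hne hst
  have htx : ForwardConv d (t ∘ φ) x := hsx.of_forwardParallel hd (hst.comp_strictMono hφ)
  have hgap_tendsto : Tendsto (fun n => f (s (φ n)) - f (t (φ n))) atTop (𝓝 0) := by
    simpa using (hf.tendsto_comp hsx).sub (hf.tendsto_comp htx)
  obtain ⟨n, hn⟩ := (hgap_tendsto.eventually (Metric.ball_mem_nhds 0 hε)).exists
  rw [Real.dist_0_eq_abs] at hn
  exact (hgap (φ n)).not_gt hn

/-- if every pair of termwise-distinct forward parallel sequences has the first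
sequence clustering, then `(X,d)` is UC. -/
theorem isUC_of_parallel_cluster {X : Type*} (d : X → X → ℝ) (hd : IsQuasiMetric d)
    (hT1 : @T1Space X (forwardTopology d))
    (hN : @NormalSpace X (forwardTopology d))
    (h : ∀ s t : ℕ → X, (∀ n, s n ≠ t n) → ForwardParallel d s t →
      ∃ x : X, IsClusterPointOf d s x) :
    IsUC d :=
  isUC_of_parallel_cluster_general d hd h
end

section
/- Let (X,d) be a T₁ quasi-metric space in which forward convergence implies backward convergence. If every two nonempty disjoint closed subsets A,B of (X,d) satisfy d(A,B)>0, then every closed discrete subset of (X,d) is uniformly discrete. -/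
open Filter Topology Set

set_option linter.unusedVariables false in
theorem aux_subset_closed {X : Type*} (d : X → X → ℝ) (hd : IsQuasiMetric d)
    (A : Set X) (hAc : @IsClosed X (forwardTopology d) A)
    (hAd : ∀ a ∈ A, ∃ ε > (0:ℝ), ∀ y ∈ A, d a y < ε → y = a)
    (S : Set X) (hS : S ⊆ A) : @IsClosed X (forwardTopology d) S := by
  letI := forwardTopology d
  rw [← isOpen_compl_iff, isOpen_iff_forall_mem_open]
  intro x hx
  by_cases hxA : x ∈ A
  · obtain ⟨ε, hε, hball⟩ := hAd x hxA
    refine ⟨{y | d x y < ε}, ?_, ?_, ?_⟩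
    · intro y hy hyS
      exact hx (by rw [← hball y (hS hyS) hy]; exact hyS)
    · exact TopologicalSpace.isOpen_generateFrom_of_mem ⟨x, ε, hε, rfl⟩
    · show d x x < ε; rw [hd.refl]; exact hε
  · exact ⟨Aᶜ, Set.compl_subset_compl.mpr hS, hAc.isOpen_compl, hxA⟩

theorem aux_setDist_le {X : Type*} (d : X → X → ℝ) (hd : IsQuasiMetric d)
    {B C : Set X} {a b : X} (ha : a ∈ B) (hb : b ∈ C) : setDist d B C ≤ d a b :=
  csInf_le ⟨0, fun _ ⟨x, _, y, _, hr⟩ => hr ▸ hd.nonneg x y⟩ ⟨a, ha, b, hb, rfl⟩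

/-- Extraction: if every value appears finitely often in `a` and in `b`, one can extract a
subsequence along which all values `a (φ i), b (φ i)` are pairwise "fresh". -/
theorem aux_extract {X : Type*} (a b : ℕ → X)
    (hfa : ∀ p : X, {n | a n = p}.Finite) (hfb : ∀ p : X, {n | b n = p}.Finite) :
    ∃ φ : ℕ → ℕ, StrictMono φ ∧ ∀ i j, i < j →
      a (φ j) ≠ a (φ i) ∧ a (φ j) ≠ b (φ i) ∧ b (φ j) ≠ a (φ i) ∧ b (φ j) ≠ b (φ i) := by
  classical
  set Bad : ℕ → Set ℕ := fun m =>
    {n | a n = a m} ∪ {n | b n = a m} ∪ {n | a n = b m} ∪ {n | b n = b m} with hBad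
  have hBadFin : ∀ m, (Bad m).Finite := fun m =>
    (((hfa (a m)).union (hfb (a m))).union (hfa (b m))).union (hfb (b m))
  have hstep : ∀ s : Finset ℕ, ∃ n : ℕ, ∀ m ∈ s, n ∉ Bad m ∧ m < n := by
    intro s
    have hT : (⋃ m ∈ s, (Bad m ∪ Set.Iic m)).Finite :=
      Set.Finite.biUnion s.finite_toSet (fun m _ => (hBadFin m).union (Set.finite_Iic m))
    obtain ⟨n, hn⟩ := hT.infinite_compl.nonempty
    refine ⟨n, fun m hm => ?_⟩
    have : n ∉ Bad m ∪ Set.Iic m := fun h => hn (Set.mem_biUnion hm h)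
    exact ⟨fun h => this (Or.inl h), by
      by_contra h; exact this (Or.inr (Set.mem_Iic.mpr (le_of_not_gt h)))⟩
  choose f hf using hstep
  let F : ℕ → Finset ℕ := fun k => Nat.rec ({0} : Finset ℕ) (fun _ s => insert (f s) s) k
  let φ : ℕ → ℕ := fun k => Nat.rec 0 (fun k' _ => f (F k')) k
  have hFsucc : ∀ k, F (k + 1) = insert (φ (k + 1)) (F k) := fun k => rfl
  have hmem : ∀ k, ∀ i ≤ k, φ i ∈ F k := by
    intro k
    induction k with
    | zero => intro i hi; interval_cases i; exact Finset.mem_singleton_self 0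
    | succ k ih =>
      intro i hi
      rcases Nat.lt_succ_iff_lt_or_eq.mp (Nat.lt_succ_of_le hi) with h | h
      · exact hFsucc k ▸ Finset.mem_insert_of_mem (ih i (Nat.lt_succ_iff.mp h))
      · rw [h]; exact hFsucc k ▸ Finset.mem_insert_self _ _
  have key : ∀ k, ∀ i ≤ k, φ (k + 1) ∉ Bad (φ i) ∧ φ i < φ (k + 1) := by
    intro k i hi
    exact hf (F k) (φ i) (hmem k i hi)
  have hmono : StrictMono φ := strictMono_nat_of_lt_succ fun k => (key k k le_rfl).2
  refine ⟨φ, hmono, fun i j hij => ?_⟩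
  cases j with
  | zero => omega
  | succ k =>
    have hnotbad : φ (k + 1) ∉ Bad (φ i) := (key k i (Nat.lt_succ_iff.mp hij)).1
    rw [hBad] at hnotbad
    simp only [Set.mem_union, Set.mem_setOf_eq, not_or] at hnotbad
    exact ⟨hnotbad.1.1.1, hnotbad.1.2, hnotbad.1.1.2, hnotbad.2⟩


/-- if disjoint nonempty closed sets are at positive distance, then every closed
discrete set is uniformly discrete. -/
theorem uniformly_discrete_of_equinormal {X : Type*} (d : X → X → ℝ)
    (hd : IsQuasiMetric d)
    (hT1 : ∀ x y : X, x ≠ y → 0 < d x y)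
    (hfb : ∀ (s : ℕ → X) (x : X), ForwardConv d s x → BackwardConv d s x)
    (hEq : ∀ A B : Set X, A.Nonempty → B.Nonempty →
      @IsClosed X (forwardTopology d) A → @IsClosed X (forwardTopology d) B →
      Disjoint A B → 0 < setDist d A B)
    (A : Set X) (hA : A.Nonempty)
    (hAc : @IsClosed X (forwardTopology d) A)
    (hAd : ∀ a ∈ A, ∃ ε > (0:ℝ), ∀ y ∈ A, d a y < ε → y = a) :
    ∃ δ > (0:ℝ), ∀ x ∈ A, ∀ y ∈ A, x ≠ y → δ ≤ d x y := by
  classical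
  by_contra h
  push_neg at h
  have hpairs : ∀ n : ℕ, ∃ p : X × X, p.1 ∈ A ∧ p.2 ∈ A ∧ p.1 ≠ p.2 ∧
      d p.1 p.2 < 1 / ((n : ℝ) + 1) := by
    intro n
    obtain ⟨x, hx, y, hy, hxy, hlt⟩ := h (1 / ((n : ℝ) + 1)) (by positivity)
    exact ⟨(x, y), hx, hy, hxy, hlt⟩
  choose p hp1 hp2 hpne hplt using hpairs
  set a : ℕ → X := fun n => (p n).1 with ha
  set b : ℕ → X := fun n => (p n).2 with hb
  have finish : ∀ B C : Set X, B.Nonempty → C.Nonempty → B ⊆ A → C ⊆ A →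
      Disjoint B C → (∀ ε > (0:ℝ), ∃ x ∈ B, ∃ y ∈ C, d x y < ε) → False := by
    intro B C hBne hCne hBA hCA hdisj hsmall
    have hδ := hEq B C hBne hCne (aux_subset_closed d hd A hAc hAd B hBA)
      (aux_subset_closed d hd A hAc hAd C hCA) hdisj
    obtain ⟨x, hx, y, hy, hlt⟩ := hsmall _ hδ
    exact absurd (aux_setDist_le d hd hx hy) (not_le.mpr hlt)
  have hle : ∀ {N n : ℕ} {ε : ℝ}, N ≤ n → 1 / ((N : ℝ) + 1) < ε → d (a n) (b n) < ε := by
    intro N n ε hNn hNε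
    refine lt_trans (lt_of_lt_of_le (hplt n) ?_) hNε
    apply one_div_le_one_div_of_le (by positivity)
    exact_mod_cast Nat.succ_le_succ hNn
  by_cases h1 : ∃ q : X, {n | b n = q}.Infinite
  · obtain ⟨q, hq⟩ := h1
    obtain ⟨n₀, hn₀⟩ := hq.nonempty
    apply finish (a '' {n | b n = q}) {q} ⟨a n₀, n₀, hn₀, rfl⟩ ⟨q, rfl⟩
      (by rintro x ⟨n, _, rfl⟩; exact hp1 n) (by rintro x rfl; exact hn₀ ▸ hp2 n₀)
    · rw [Set.disjoint_singleton_right]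
      rintro ⟨n, hn, hn'⟩
      exact hpne n (hn'.trans hn.symm)
    · intro ε hε
      obtain ⟨N, hN⟩ := exists_nat_one_div_lt hε
      obtain ⟨n, hn, hNn⟩ := hq.exists_gt N
      exact ⟨a n, ⟨n, hn, rfl⟩, q, rfl, hn ▸ hle hNn.le (by exact_mod_cast hN)⟩
  by_cases h2 : ∃ q : X, {n | a n = q}.Infinite
  · obtain ⟨q, hq⟩ := h2
    obtain ⟨n₀, hn₀⟩ := hq.nonempty
    apply finish {q} (b '' {n | a n = q}) ⟨q, rfl⟩ ⟨b n₀, n₀, hn₀, rfl⟩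
      (by rintro x rfl; exact hn₀ ▸ hp1 n₀) (by rintro x ⟨n, _, rfl⟩; exact hp2 n)
    · rw [Set.disjoint_singleton_left]
      rintro ⟨n, hn, hn'⟩
      exact hpne n (hn.trans hn'.symm)
    · intro ε hε
      obtain ⟨N, hN⟩ := exists_nat_one_div_lt hε
      obtain ⟨n, hn, hNn⟩ := hq.exists_gt N
      exact ⟨q, rfl, b n, ⟨n, hn, rfl⟩, hn ▸ hle hNn.le (by exact_mod_cast hN)⟩
  push_neg at h1 h2
  obtain ⟨φ, hmono, hfresh⟩ := aux_extract a b
    (fun q => h2 q) (fun q => h1 q)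
  apply finish (Set.range (a ∘ φ)) (Set.range (b ∘ φ)) ⟨a (φ 0), 0, rfl⟩ ⟨b (φ 0), 0, rfl⟩
    (by rintro x ⟨n, rfl⟩; exact hp1 _) (by rintro x ⟨n, rfl⟩; exact hp2 _)
  · rw [Set.disjoint_left]
    rintro x ⟨i, rfl⟩ ⟨j, hj⟩
    rcases lt_trichotomy i j with hij | rfl | hij
    · exact (hfresh i j hij).2.2.1 hj
    · exact hpne (φ i) hj.symm
    · exact (hfresh j i hij).2.1 hj.symm
  · intro ε hε
    obtain ⟨N, hN⟩ := exists_nat_one_div_lt hε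
    exact ⟨a (φ N), ⟨N, rfl⟩, b (φ N), ⟨N, rfl⟩,
      hle hmono.le_apply (by exact_mod_cast hN)⟩
end

section
/- Let (X,d) be a T₁ quasi-metric space whose forward topology is normal, and suppose (X,d) is a UC space. Then every closed subset A of X, with the restricted quasi-metric, is itself a UC space. -/
open Filter Topology Set

/-!
A forward continuous function on the closed set `A` is continuous for the subspace topology,
since the forward topology of the restricted quasi-metric is the subspace topology. By the
Tietze extension theorem in the normal space `X` it extends to a continuous, hence forward
continuous, function on `X`; that extension is uniformly continuous because `X` is UC, and
uniform continuity passes to its restriction to `A`.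
-/

namespace IsQuasiMetric

variable {X : Type*} {d : X → X → ℝ}

lemma subtype (hd : IsQuasiMetric d) (A : Set X) : IsQuasiMetric (fun a b : A => d a b) where
  nonneg a b := hd.nonneg a b
  refl a := hd.refl a
  eq_of_both_zero a b hab hba := Subtype.ext (hd.eq_of_both_zero a b hab hba)
  triangle a b c := hd.triangle a b c

lemma isOpen_forwardTopology_iff (hd : IsQuasiMetric d) {U : Set X} :
    IsOpen[forwardTopology d] U ↔ ∀ x ∈ U, ∃ ε > (0:ℝ), {y | d x y < ε} ⊆ U := by
  constructor
  · intro hU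
    induction hU with
    | basic S hS =>
      obtain ⟨z, ε, -, rfl⟩ := hS
      intro x (hx : d z x < ε)
      refine ⟨ε - d z x, sub_pos.2 hx, fun y (hy : d x y < ε - d z x) => ?_⟩
      show d z y < ε
      linarith [hd.triangle z y x]
    | univ => exact fun _ _ => ⟨1, one_pos, subset_univ _⟩
    | inter U V _ _ ihU ihV =>
      intro x ⟨hxU, hxV⟩
      obtain ⟨ε₁, hε₁, hU⟩ := ihU x hxU
      obtain ⟨ε₂, hε₂, hV⟩ := ihV x hxV
      exact ⟨min ε₁ ε₂, lt_min hε₁ hε₂, fun y (hy : d x y < min ε₁ ε₂) =>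
        ⟨hU (hy.trans_le (min_le_left _ _)), hV (hy.trans_le (min_le_right _ _))⟩⟩
    | sUnion S _ ih =>
      rintro x ⟨T, hT, hxT⟩
      obtain ⟨ε, hε, hball⟩ := ih T hT x hxT
      exact ⟨ε, hε, hball.trans (subset_sUnion_of_mem hT)⟩
  · intro h
    refine (@isOpen_iff_forall_mem_open X (forwardTopology d) U).2 fun x hx => ?_
    obtain ⟨ε, hε, hball⟩ := h x hx
    exact ⟨_, hball, .basic _ ⟨x, ε, hε, rfl⟩, show d x x < ε by rwa [hd.refl]⟩

lemma forwardContinuous_iff_continuous (hd : IsQuasiMetric d) {f : X → ℝ} :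
    ForwardContinuous d f ↔ Continuous[forwardTopology d, _] f := by
  rw [continuous_def]
  constructor
  · intro hf U hU
    refine hd.isOpen_forwardTopology_iff.2 fun x hx => ?_
    obtain ⟨ε, hε, hball⟩ := Metric.isOpen_iff.1 hU (f x) hx
    obtain ⟨δ, hδ, hδf⟩ := hf x ε hε
    refine ⟨δ, hδ, fun y hy => hball ?_⟩
    rw [Metric.mem_ball, Real.dist_eq, abs_sub_comm]
    exact hδf y hy
  · intro hf x ε hε
    obtain ⟨δ, hδ, hball⟩ := hd.isOpen_forwardTopology_iff.1
      (hf _ Metric.isOpen_ball) x (Metric.mem_ball_self hε)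
    refine ⟨δ, hδ, fun y hy => ?_⟩
    have hy : dist (f y) (f x) < ε := hball hy
    rwa [Real.dist_eq, abs_sub_comm] at hy

lemma forwardTopology_subtype_eq_induced (hd : IsQuasiMetric d) (A : Set X) :
    forwardTopology (fun a b : A => d a b) =
      TopologicalSpace.induced Subtype.val (forwardTopology d) := by
  apply le_antisymm
  · rintro _ ⟨V, hV, rfl⟩
    refine (hd.subtype A).isOpen_forwardTopology_iff.2 fun a ha => ?_
    obtain ⟨ε, hε, hball⟩ := hd.isOpen_forwardTopology_iff.1 hV a ha
    exact ⟨ε, hε, fun b hb => hball hb⟩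
  · refine le_generateFrom ?_
    rintro _ ⟨a, ε, hε, rfl⟩
    exact ⟨{y | d a y < ε}, .basic _ ⟨a, ε, hε, rfl⟩, rfl⟩

end IsQuasiMetric

theorem closed_subset_isUC_general {X : Type*} (d : X → X → ℝ) (hd : IsQuasiMetric d)
    (hN : @NormalSpace X (forwardTopology d))
    (hUC : IsUC d)
    (A : Set X) (hAc : @IsClosed X (forwardTopology d) A) :
    IsUC (fun a b : A => d a b) := by
  let _ : TopologicalSpace X := forwardTopology d
  intro f hf
  have hf_cont : Continuous f := by
    have := (hd.subtype A).forwardContinuous_iff_continuous.1 hf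
    rwa [hd.forwardTopology_subtype_eq_induced A] at this
  obtain ⟨g, hgf⟩ := ContinuousMap.exists_restrict_eq hAc ⟨f, hf_cont⟩
  have hf_eq : f = g ∘ Subtype.val := congrArg (⇑) hgf.symm
  have hg_unif : UniformlyCont d g := hUC g (hd.forwardContinuous_iff_continuous.2 g.continuous)
  rw [hf_eq]
  exact fun ε hε => (hg_unif ε hε).imp fun _ ⟨hδ, hg⟩ => ⟨hδ, fun a b => hg a b⟩

/-- a closed subset of a T₁, normal, UC quasi-metric space is itself UC
with the restricted quasi-metric. -/
theorem closed_subset_isUC {X : Type*} (d : X → X → ℝ) (hd : IsQuasiMetric d)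
    (hT1 : @T1Space X (forwardTopology d))
    (hN : @NormalSpace X (forwardTopology d))
    (hUC : IsUC d)
    (A : Set X) (hAc : @IsClosed X (forwardTopology d) A) :
    IsUC (fun a b : A => d a b) :=
  closed_subset_isUC_general d hd hN hUC A hAc
end
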